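/- arXiv:1702.07219 — 2 statements merged into one kernel-verified Lean document; each statement's English description precedes it below -/
import Mathlib

section
/- Iterated potential growth for the ORBIT update: let π ≥ 1, ε ≥ 1, and let κ be a real number with κ ≥ 1. Let (q_j)_{j ∈ ℕ} be real numbers with 1 ≤ q_j ≤ κ for all j, and define z_0 = 0 and z_{j+1} = z_j·(1 + 1/(π·ε)) + 1/(π·q_j). Then for every natural number t, z_t ≥ (1/κ)·((1 + 1/(π·ε))^t − 1). -/
/-- In terms of `w = z + a` the step reads `r * w j ≤ w (j + 1)`. -/
theorem mul_pow_sub_one_le_of_affine_step {r a : ℝ} {z : ℕ → ℝ} (hr : 0 ≤ r) (h0 : 0 ≤ z 0)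
    (hstep : ∀ j, r * z j + a * (r - 1) ≤ z (j + 1)) (t : ℕ) : a * (r ^ t - 1) ≤ z t := by
  induction t with
  | zero => simpa using h0
  | succ t ih =>
    calc a * (r ^ (t + 1) - 1) = r * (a * (r ^ t - 1)) + a * (r - 1) := by ring
      _ ≤ r * z t + a * (r - 1) := by gcongr
      _ ≤ z (t + 1) := hstep t

theorem orbit_potential_growth_general (π ε κ : ℝ) (hπ : 1 ≤ π) (hε : 1 ≤ ε)
    (q : ℕ → ℝ) (hq1 : ∀ j, 1 ≤ q j) (hqκ : ∀ j, q j ≤ κ)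
    (z : ℕ → ℝ) (hz0 : z 0 = 0)
    (hzrec : ∀ j, z (j + 1) = z j * (1 + 1 / (π * ε)) + 1 / (π * q j)) :
    ∀ t : ℕ, (1 / κ) * ((1 + 1 / (π * ε)) ^ t - 1) ≤ z t := by
  have hπ0 : 0 < π := by linarith
  have hε0 : 0 < ε := by linarith
  have hincrement : ∀ j, 1 / κ * (1 / (π * ε)) ≤ 1 / (π * q j) := fun j => by
    have hq0 : 0 < q j := by linarith [hq1 j]
    have hκε : q j ≤ κ * ε := by nlinarith [hqκ j]
    rw [one_div_mul_one_div, ← mul_assoc, mul_comm κ π, mul_assoc]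
    exact one_div_le_one_div_of_le (by positivity) (by gcongr)
  refine mul_pow_sub_one_le_of_affine_step (by positivity) hz0.ge fun j => ?_
  rw [hzrec, mul_comm, add_sub_cancel_left]
  linarith [hincrement j]

/-- Iterated potential growth for the ORBIT update. -/
theorem orbit_potential_growth (π ε κ : ℝ) (hπ : 1 ≤ π) (hε : 1 ≤ ε) (hκ : 1 ≤ κ)
    (q : ℕ → ℝ) (hq1 : ∀ j, 1 ≤ q j) (hqκ : ∀ j, q j ≤ κ)
    (z : ℕ → ℝ) (hz0 : z 0 = 0)
    (hzrec : ∀ j, z (j + 1) = z j * (1 + 1 / (π * ε)) + 1 / (π * q j)) :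
    ∀ t : ℕ, (1 / κ) * ((1 + 1 / (π * ε)) ^ t - 1) ≤ z t :=
  orbit_potential_growth_general π ε κ hπ hε q hq1 hqκ z hz0 hzrec
end

section
/- Bound on the dual load of a partition (inequality (19) of the paper): let π ≥ 1 and ε ≥ 1 be real numbers, let κ be a real number with κ ≥ 1, and let S ≥ 0 be a real number. If (1/κ)·((1 + 1/(π·ε))^S − 1) ≤ 3 (real exponentiation), then S ≤ log(3·κ + 1)·(1 + π·ε), where log denotes the natural logarithm. In particular S ≤ π·C·ε·log κ for a suitable absolute constant C when κ ≥ 2. -/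
/-!
Clearing `κ` turns the hypothesis into `(1 + 1/(πε))^S ≤ 3κ + 1`. Taking logarithms and using
`log (1 + 1/P) ≥ 1/(1 + P)` (which is `log x ≥ 1 - 1/x`) gives
`S ≤ log (3κ + 1) · (1 + πε)`.
For `κ ≥ 2` one has `3κ + 1 ≤ κ³` and `1 + πε ≤ 2πε`, so the constant `C = 6` works.
-/

namespace Real

lemma one_div_one_add_le_log_one_add_one_div {P : ℝ} (hP : 0 < P) :
    1 / (1 + P) ≤ log (1 + 1 / P) := by
  have key := one_sub_inv_le_log_of_pos (x := 1 + 1 / P) (by positivity)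
  have hrewrite : 1 - (1 + 1 / P)⁻¹ = 1 / (1 + P) := by field_simp; ring
  rwa [hrewrite] at key

lemma le_log_mul_one_add_of_one_add_one_div_rpow_le {P S M : ℝ} (hP : 0 < P) (hS : 0 ≤ S)
    (h : (1 + 1 / P) ^ S ≤ M) : S ≤ log M * (1 + P) := by
  have hbase : 0 < 1 + 1 / P := by positivity
  have hlog : S * log (1 + 1 / P) ≤ log M := by
    rw [← log_rpow hbase]
    exact log_le_log (by positivity) h
  have hS_div : S / (1 + P) ≤ log M :=
    calc S / (1 + P) = S * (1 / (1 + P)) := by ring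
      _ ≤ S * log (1 + 1 / P) :=
          mul_le_mul_of_nonneg_left (one_div_one_add_le_log_one_add_one_div hP) hS
      _ ≤ log M := hlog
  rwa [div_le_iff₀ (by linarith)] at hS_div

lemma log_three_mul_add_one_le {κ : ℝ} (hκ : 2 ≤ κ) : log (3 * κ + 1) ≤ 3 * log κ := by
  have hcube : 3 * κ + 1 ≤ κ ^ 3 := by
    nlinarith [mul_nonneg (by linarith : (0 : ℝ) ≤ κ - 2) (sq_nonneg κ)]
  calc log (3 * κ + 1) ≤ log (κ ^ 3) := log_le_log (by linarith) hcube
    _ = 3 * log κ := by rw [log_pow]; norm_num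

end Real

lemma dual_load_le_log {P κ S : ℝ} (hP : 0 < P) (hκ : 0 < κ) (hS : 0 ≤ S)
    (h : (1 / κ) * ((1 + 1 / P) ^ S - 1) ≤ 3) : S ≤ Real.log (3 * κ + 1) * (1 + P) := by
  have hpow : (1 + 1 / P) ^ S ≤ 3 * κ + 1 := by
    rw [one_div_mul_eq_div, div_le_iff₀ hκ] at h
    linarith
  exact Real.le_log_mul_one_add_of_one_add_one_div_rpow_le hP hS hpow

/-- Bound on the dual load of a partition (inequality (19)), together with the
derived `O(ε log κ)` bound for `κ ≥ 2` with an absolute constant `C`. -/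
theorem orbit_dual_load_bound :
    (∀ π ε κ S : ℝ, 1 ≤ π → 1 ≤ ε → 1 ≤ κ → 0 ≤ S →
      (1 / κ) * ((1 + 1 / (π * ε)) ^ S - 1) ≤ 3 →
      S ≤ Real.log (3 * κ + 1) * (1 + π * ε)) ∧
    (∃ C : ℝ, 0 < C ∧ ∀ π ε κ S : ℝ, 1 ≤ π → 1 ≤ ε → 2 ≤ κ → 0 ≤ S →
      (1 / κ) * ((1 + 1 / (π * ε)) ^ S - 1) ≤ 3 →
      S ≤ π * C * ε * Real.log κ) := by
  refine ⟨fun π ε κ S hπ hε hκ hS h => dual_load_le_log (by nlinarith) (by linarith) hS h,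
    6, by norm_num, ?_⟩
  intro π ε κ S hπ hε hκ hS h
  have hπε : 1 ≤ π * ε := by nlinarith
  have hlogκ : 0 ≤ Real.log κ := Real.log_nonneg (by linarith)
  calc S ≤ Real.log (3 * κ + 1) * (1 + π * ε) :=
        dual_load_le_log (by linarith) (by linarith) hS h
    _ ≤ (3 * Real.log κ) * (2 * (π * ε)) :=
        mul_le_mul (Real.log_three_mul_add_one_le hκ) (by linarith) (by linarith) (by positivity)
    _ = π * 6 * ε * Real.log κ := by ring
end
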